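/- A twig query q is implied by a disjunction-free multiplicity schema S (every tree satisfying S satisfies q) if and only if q can be embedded in the universal dependency graph G_S^u of S. -/

import Mathlib

open scoped Classical

variable {α : Type}

/-- Unordered words: multisets of symbols, as occurrence-count functions. -/
abbrev UWord (α : Type) := α → ℕ

/-- Multiplicities `*`, `+`, `?`, `0`, `1`. -/
inductive Mult : Type where
  | zero | one | opt | plus | star
deriving DecidableEq

/-- Interpretation of multiplicities as sets of natural numbers. -/
def Mult.sem : Mult → Set ℕ
  | .zero => {0}
  | .one => {1}
  | .opt => {0, 1}
  | .plus => {n | 0 < n}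
  | .star => Set.univ

/-- A disjunction `a₁^{M₁} | … | a_k^{M_k}`. -/
abbrev Disj (α : Type) := List (α × Mult)

/-- A disjunctive multiplicity expression `D₁^{M₁} ⊎ … ⊎ D_n^{M_n}`. -/
abbrev DME (α : Type) := List (Disj α × Mult)

/-- Language of `a^M`. -/
def singleLang (a : α) (m : Mult) : Set (UWord α) :=
  {w | w a ∈ m.sem ∧ ∀ b, b ≠ a → w b = 0}

/-- Language of a disjunction. -/
def disjLang (D : Disj α) : Set (UWord α) :=
  {w | ∃ p ∈ D, w ∈ singleLang p.1 p.2}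

/-- Pointwise (multiset) sum of a list of unordered words. -/
def sumWords (ws : List (UWord α)) : UWord α := fun a => (ws.map (fun u => u a)).sum

/-- Language of `D^M`. -/
def powLang (L : Set (UWord α)) (m : Mult) : Set (UWord α) :=
  {w | ∃ ws : List (UWord α), ws.length ∈ m.sem ∧ (∀ u ∈ ws, u ∈ L) ∧ w = sumWords ws}

/-- Language of a disjunctive multiplicity expression. -/
def dmeLang (E : DME α) : Set (UWord α) :=
  {w | ∃ ws : List (UWord α),
      List.Forall₂ (fun p u => u ∈ powLang (disjLang p.1) p.2) E ws ∧ w = sumWords ws}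

/-- Symbols occurring in a disjunctive multiplicity expression. -/
def dmeSymbols (E : DME α) : List α := E.flatMap (fun p => p.1.map Prod.fst)

/-- Normalized disjunctive multiplicity expression (each symbol occurs at most once,
each disjunction nonempty, and the two normal-form conditions of the paper). -/
def Normalized (E : DME α) : Prop :=
  (dmeSymbols E).Nodup ∧
  ∀ p ∈ E, p.1 ≠ [] ∧
    (p.2 ≠ Mult.one → p.2 = Mult.plus ∧ ∀ q ∈ p.1, q.2 = Mult.one) ∧
    ((∃ q ∈ p.1, (0 : ℕ) ∈ q.2.sem) → ∀ q ∈ p.1, (0 : ℕ) ∈ q.2.sem)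

/-- Conflicting pairs of siblings `C_E`. -/
def CE (E : DME α) : Set (α × α) :=
  {p | ¬ ∃ w ∈ dmeLang E, w p.1 ≠ 0 ∧ w p.2 ≠ 0}

/-- Extended cardinality map `N_E`. -/
def NE (E : DME α) : Set (α × ℕ) :=
  {p | ∃ w ∈ dmeLang E, w p.1 = p.2}

/-- Sets of required symbols `P_E`. -/
def PE (E : DME α) : Set (Set α) :=
  {X | ∀ w ∈ dmeLang E, ∃ a ∈ X, w a ≠ 0}

/-- Consistency of an unordered word with a characterizing triple. -/
def ConsTriple (w : UWord α) (C : Set (α × α)) (N : Set (α × ℕ)) (P : Set (Set α)) : Prop :=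
  (∀ p ∈ C, ¬ (w p.1 ≠ 0 ∧ w p.2 ≠ 0)) ∧
  (∀ a, (a, w a) ∈ N) ∧
  (∀ X ∈ P, ∃ a ∈ X, w a ≠ 0)

/-- Language of a disjunction-free multiplicity expression given as a list of
symbol/multiplicity pairs. -/
def dfLang (l : List (α × Mult)) : Set (UWord α) :=
  {w | (∀ p ∈ l, w p.1 ∈ p.2.sem) ∧ ∀ b, b ∉ l.map Prod.fst → w b = 0}

/-- Finite unordered trees. -/
inductive UTree (α : Type) : Type where
  | node : α → List (UTree α) → UTree α

def UTree.lab : UTree α → α | .node a _ => a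

def UTree.children : UTree α → List (UTree α) | .node _ ts => ts

/-- Twig queries: labels in `Σ ∪ {⋆}` (wildcard = `none`); each child subquery is tagged
with `false` for a child edge and `true` for a descendant edge. -/
inductive Twig (α : Type) : Type where
  | node : Option α → List (Twig α × Bool) → Twig α

/-- Proper subtree (proper descendant) relation. -/
inductive StrictDesc : UTree α → UTree α → Prop where
  | child {s t : UTree α} : s ∈ t.children → StrictDesc s t
  | step {s u t : UTree α} : StrictDesc s u → u ∈ t.children → StrictDesc s t

/-- `Sat t q`: the twig query `q` can be embedded in the tree `t`
(root to root, child edges to child edges, descendant edges to proper descendants,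
labels preserved up to wildcard). -/
def Sat : UTree α → Twig α → Prop
  | t, .node l qs =>
      (∀ x ∈ l, x = t.lab) ∧
      ∀ p ∈ qs, (p.2 = false → ∃ t' ∈ t.children, Sat t' p.1) ∧
                (p.2 = true → ∃ t', StrictDesc t' t ∧ Sat t' p.1)
termination_by t q => sizeOf q
decreasing_by
  all_goals
    obtain ⟨q', b'⟩ := p
    have h1 : sizeOf ((q', b') : Twig α × Bool) < sizeOf qs := List.sizeOf_lt_of_mem (by assumption)
    simp at h1 ⊢
    omega

/-- `TEmb t' t` : the tree `t'` can be embedded in the tree `t` (root-, child-, and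
label-preserving). -/
def TEmb : UTree α → UTree α → Prop
  | .node a ts', t => t.lab = a ∧ ∀ s' ∈ ts', ∃ s ∈ t.children, TEmb s' s

/-- `QGEmb E a q` : the twig query `q` can be embedded in the rooted graph with edge
relation `E` at root `a`. -/
def QGEmb (E : α → α → Prop) : α → Twig α → Prop
  | a, .node l qs =>
      (∀ x ∈ l, x = a) ∧
      ∀ p ∈ qs, (p.2 = false → ∃ b, E a b ∧ QGEmb E b p.1) ∧
                (p.2 = true → ∃ b, Relation.TransGen E a b ∧ QGEmb E b p.1)
termination_by a q => sizeOf q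
decreasing_by
  all_goals
    obtain ⟨q', b'⟩ := p
    have h1 : sizeOf ((q', b') : Twig α × Bool) < sizeOf qs := List.sizeOf_lt_of_mem (by assumption)
    simp at h1 ⊢
    omega

/-- Labeled paths of a tree: sequences of labels along root-to-node paths. -/
inductive IsLabPath : UTree α → List α → Prop where
  | root {a : α} {ts : List (UTree α)} : IsLabPath (UTree.node a ts) [a]
  | cons {a : α} {ts : List (UTree α)} {s : UTree α} {p : List α} :
      s ∈ ts → IsLabPath s p → IsLabPath (UTree.node a ts) (a :: p)

/-- Paths of a rooted graph: nonempty vertex sequences starting at the root and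
following edges. -/
def IsGPath (E : α → α → Prop) (root : α) (p : List α) : Prop :=
  p ≠ [] ∧ p.head? = some root ∧ p.Chain' E

/-- The unfolding of a rooted graph, truncated at depth `n`.  For a graph with no cycle
reachable from the root, taking `n = Fintype.card α` yields the full unfolding. -/
noncomputable def unfoldG [Fintype α] (E : α → α → Prop) : ℕ → α → UTree α
  | 0, a => .node a []
  | n + 1, a => .node a (((Finset.univ.filter fun b => E a b).toList).map (unfoldG E n))

/-- Number of leaves of a tree. -/
def leafCount : UTree α → ℕ
  | .node _ ts => if ts.isEmpty then 1 else (ts.attach.map (fun s => leafCount s.1)).sum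
decreasing_by
  have h1 := List.sizeOf_lt_of_mem s.2
  simp
  omega

/-- Disjunction-free multiplicity schema: a root label together with, for each label `a`,
a disjunction-free multiplicity expression given as the multiplicity `R a b` of every
symbol `b` (`Mult.zero` meaning `b` does not occur). -/
structure MS (α : Type) where
  root : α
  R : α → α → Mult

/-- Every node's children-label multiset matches the rule for the node's label. -/
inductive LocalOK [DecidableEq α] (R : α → α → Mult) : UTree α → Prop where
  | node {a : α} {ts : List (UTree α)} :
      (∀ b, ((ts.map UTree.lab).count b) ∈ (R a b).sem) →
      (∀ s ∈ ts, LocalOK R s) →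
      LocalOK R (UTree.node a ts)

/-- A tree satisfies a disjunction-free multiplicity schema. -/
def SatS [DecidableEq α] (S : MS α) (t : UTree α) : Prop :=
  t.lab = S.root ∧ LocalOK S.R t

/-- Edges of the universal dependency graph: `b` occurs in `R a` with multiplicity `+` or `1`. -/
def uEdge (S : MS α) (a b : α) : Prop := S.R a b = Mult.plus ∨ S.R a b = Mult.one

/-- Edges of the dependency graph: `b` occurs in `R a` with multiplicity in `{*,+,?,1}`. -/
def dEdge (S : MS α) (a b : α) : Prop := S.R a b ≠ Mult.zero

/-- A simulation of the rooted graph `(α, root, E)` in the tree `t`. -/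
def IsSimulation (E : α → α → Prop) (root : α) (t : UTree α) (R : α → UTree α → Prop) : Prop :=
  R root t ∧ (∀ a s, R a s → s.lab = a) ∧
  (∀ a s, R a s → ∀ b, E a b → ∃ s' ∈ s.children, R b s')

/-- One fuse step: two sibling nodes with the same label are merged into a single node
whose children are the children of both (applied anywhere in the tree). -/
inductive Fuse : UTree α → UTree α → Prop where
  | here {a b : α} {l₁ l₂ l₃ cs₁ cs₂ : List (UTree α)} :
      Fuse (UTree.node a (l₁ ++ UTree.node b cs₁ :: l₂ ++ UTree.node b cs₂ :: l₃))
           (UTree.node a (l₁ ++ UTree.node b (cs₁ ++ cs₂) :: l₂ ++ l₃))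
  | there {a : α} {s s' : UTree α} {l₁ l₂ : List (UTree α)} :
      Fuse s s' → Fuse (UTree.node a (l₁ ++ s :: l₂)) (UTree.node a (l₁ ++ s' :: l₂))

/-- One add step: an arbitrary new subtree is attached as an additional child of some
node of the tree. -/
inductive AddOp : UTree α → UTree α → Prop where
  | here {a : α} {s : UTree α} {l : List (UTree α)} :
      AddOp (UTree.node a l) (UTree.node a (s :: l))
  | there {a : α} {s s' : UTree α} {l₁ l₂ : List (UTree α)} :
      AddOp s s' → AddOp (UTree.node a (l₁ ++ s :: l₂)) (UTree.node a (l₁ ++ s' :: l₂))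

/-!
If every tree satisfying `S` satisfies `q`, then so does the unfolding of `G_S^u`: it is finite
because `G_S^u` is acyclic, and it satisfies `S` because each child label occurs exactly once,
precisely for the `+`/`1` edges. A match of `q` in the unfolding projects to an embedding of `q`
into the graph. Conversely, in a tree satisfying `S` a node labelled `a` has a child labelled `b`
for every edge `(a, b)` of `G_S^u`, so the tree simulates the graph from its root, and an
embedding of `q` into the graph lifts along the simulation.
-/

theorem Twig.sizeOf_lt_of_mem {l : Option α} {qs : List (Twig α × Bool)} {p : Twig α × Bool}
    (hp : p ∈ qs) : sizeOf p.1 < sizeOf (Twig.node l qs) := by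
  obtain ⟨q, b⟩ := p
  have := List.sizeOf_lt_of_mem hp
  simp only [Prod.mk.sizeOf_spec, Twig.node.sizeOf_spec] at this ⊢
  omega

theorem StrictDesc.trans_child {s t s' : UTree α} (h : StrictDesc s t) (hs' : s' ∈ s.children) :
    StrictDesc s' t := by
  induction h with
  | child hmem => exact .step (.child hs') hmem
  | step _ hmem ih => exact .step ih hmem

section Simulation

variable {E : α → α → Prop} {R : α → UTree α → Prop}

theorem IsSimulation.exists_strictDesc {a b : α} {t : UTree α} (hsim : IsSimulation E a t R)
    (hab : Relation.TransGen E a b) : ∃ s, StrictDesc s t ∧ R b s := by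
  obtain ⟨hroot, -, hstep⟩ := hsim
  induction hab with
  | single hab =>
    obtain ⟨s, hs, hR⟩ := hstep _ _ hroot _ hab
    exact ⟨s, .child hs, hR⟩
  | tail _ hcb ih =>
    obtain ⟨s, hdesc, hR⟩ := ih
    obtain ⟨s', hs', hR'⟩ := hstep _ _ hR _ hcb
    exact ⟨s', hdesc.trans_child hs', hR'⟩

theorem IsSimulation.of_rel {a b : α} {t s : UTree α} (hsim : IsSimulation E a t R)
    (hbs : R b s) : IsSimulation E b s R :=
  ⟨hbs, hsim.2⟩

theorem IsSimulation.sat_of_qgEmb {a : α} {t : UTree α} (hsim : IsSimulation E a t R) :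
    ∀ q : Twig α, QGEmb E a q → Sat t q
  | .node l qs, hemb => by
    rw [QGEmb] at hemb
    rw [Sat]
    obtain ⟨hl, hqs⟩ := hemb
    refine ⟨fun x hx => (hl x hx).trans (hsim.2.1 a t hsim.1).symm, fun p hp => ⟨?_, ?_⟩⟩
    · intro hchild
      obtain ⟨b, hab, hq⟩ := (hqs p hp).1 hchild
      obtain ⟨s, hs, hR⟩ := hsim.2.2 a t hsim.1 b hab
      exact ⟨s, hs, (hsim.of_rel hR).sat_of_qgEmb p.1 hq⟩
    · intro hdesc
      obtain ⟨b, hab, hq⟩ := (hqs p hp).2 hdesc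
      obtain ⟨s, hs, hR⟩ := hsim.exists_strictDesc hab
      exact ⟨s, hs, (hsim.of_rel hR).sat_of_qgEmb p.1 hq⟩
termination_by q => sizeOf q
decreasing_by all_goals exact Twig.sizeOf_lt_of_mem hp

end Simulation

section Unfolding

variable [Fintype α] {E : α → α → Prop}

theorem unfoldG_lab (n : ℕ) (a : α) : (unfoldG E n a).lab = a := by
  cases n <;> rfl

theorem children_unfoldG_zero (a : α) : (unfoldG E 0 a).children = [] := rfl

theorem mem_children_unfoldG_succ {n : ℕ} {a : α} {t : UTree α} :
    t ∈ (unfoldG E (n + 1) a).children ↔ ∃ b, E a b ∧ unfoldG E n b = t := by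
  simp [unfoldG, UTree.children]

theorem count_lab_children_unfoldG_succ [DecidableEq α] (n : ℕ) (a b : α) :
    ((unfoldG E (n + 1) a).children.map UTree.lab).count b = if E a b then 1 else 0 := by
  have hlabs : (unfoldG E (n + 1) a).children.map UTree.lab =
      (Finset.univ.filter fun c => E a c).toList := by
    simp only [unfoldG, UTree.children, List.map_map]
    exact (List.map_congr_left fun c _ => unfoldG_lab n c).trans (List.map_id _)
  rw [hlabs]
  split_ifs with hab
  · exact List.count_eq_one_of_mem (Finset.nodup_toList _) (by simpa using hab)
  · exact List.count_eq_zero_of_not_mem (by simpa using hab)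

theorem exists_eq_unfoldG_of_mem_children {n : ℕ} {a : α} {t : UTree α}
    (h : t ∈ (unfoldG E n a).children) : ∃ m b, E a b ∧ t = unfoldG E m b := by
  cases n with
  | zero => simp [children_unfoldG_zero] at h
  | succ m =>
    obtain ⟨b, hab, rfl⟩ := mem_children_unfoldG_succ.mp h
    exact ⟨m, b, hab, rfl⟩

theorem exists_eq_unfoldG_of_strictDesc {n : ℕ} {a : α} {t : UTree α}
    (h : StrictDesc t (unfoldG E n a)) : ∃ m b, Relation.TransGen E a b ∧ t = unfoldG E m b := by
  generalize hu : unfoldG E n a = u at h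
  induction h generalizing n a with
  | child hmem =>
    subst hu
    obtain ⟨m, b, hab, rfl⟩ := exists_eq_unfoldG_of_mem_children hmem
    exact ⟨m, b, .single hab, rfl⟩
  | step _ hmem ih =>
    subst hu
    obtain ⟨m, b, hab, rfl⟩ := exists_eq_unfoldG_of_mem_children hmem
    obtain ⟨k, c, hbc, rfl⟩ := ih rfl
    exact ⟨k, c, .head hab hbc, rfl⟩

theorem qgEmb_of_sat_unfoldG : ∀ (q : Twig α) {n : ℕ} {a : α}, Sat (unfoldG E n a) q → QGEmb E a q
  | .node l qs, n, a, hsat => by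
    rw [Sat] at hsat
    rw [QGEmb]
    obtain ⟨hl, hqs⟩ := hsat
    refine ⟨fun x hx => (hl x hx).trans (unfoldG_lab n a), fun p hp => ⟨?_, ?_⟩⟩
    · intro hchild
      obtain ⟨t, ht, hq⟩ := (hqs p hp).1 hchild
      obtain ⟨m, b, hab, rfl⟩ := exists_eq_unfoldG_of_mem_children ht
      exact ⟨b, hab, qgEmb_of_sat_unfoldG p.1 hq⟩
    · intro hdesc
      obtain ⟨t, ht, hq⟩ := (hqs p hp).2 hdesc
      obtain ⟨m, b, hab, rfl⟩ := exists_eq_unfoldG_of_strictDesc ht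
      exact ⟨b, hab, qgEmb_of_sat_unfoldG p.1 hq⟩
termination_by q => sizeOf q
decreasing_by all_goals exact Twig.sizeOf_lt_of_mem hp

theorem card_transGen_lt_of_rel (hacyc : ∀ a, ¬ Relation.TransGen E a a) {a b : α} (hab : E a b) :
    (Finset.univ.filter (Relation.TransGen E b)).card <
      (Finset.univ.filter (Relation.TransGen E a)).card := by
  refine Finset.card_lt_card (Finset.ssubset_iff_of_subset ?_ |>.mpr ⟨b, ?_, ?_⟩)
  · intro c
    simpa using Relation.TransGen.head hab
  · simpa using Relation.TransGen.single hab
  · simpa using hacyc b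

theorem card_transGen_lt_card (hacyc : ∀ a, ¬ Relation.TransGen E a a) (a : α) :
    (Finset.univ.filter (Relation.TransGen E a)).card < Fintype.card α :=
  Finset.card_lt_univ_of_notMem (x := a) (by simpa using hacyc a)

end Unfolding

theorem uEdge.pos_of_mem_sem {S : MS α} {a b : α} {n : ℕ} (hab : uEdge S a b)
    (hn : n ∈ (S.R a b).sem) : 0 < n := by
  rcases hab with h | h <;> simp_all [Mult.sem]

section Schema

variable [DecidableEq α] {S : MS α}

theorem LocalOK.exists_child {t : UTree α} (hok : LocalOK S.R t) {b : α}
    (hb : uEdge S t.lab b) : ∃ s ∈ t.children, s.lab = b ∧ LocalOK S.R s := by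
  obtain ⟨hcount, hchildren⟩ := hok
  obtain ⟨s, hs, rfl⟩ := List.mem_map.mp (List.count_pos_iff.mp (hb.pos_of_mem_sem (hcount b)))
  exact ⟨s, hs, rfl, hchildren s hs⟩

theorem LocalOK.isSimulation {t : UTree α} (hok : LocalOK S.R t) :
    IsSimulation (uEdge S) t.lab t (fun a s => s.lab = a ∧ LocalOK S.R s) := by
  refine ⟨⟨rfl, hok⟩, fun _ _ h => h.1, ?_⟩
  rintro a s ⟨rfl, hs⟩ b hab
  exact hs.exists_child hab

/-- `unfoldG` cuts off at depth `n`, which would leave leaves missing their `+`/`1` children; the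
bound rules this out since the number of reachable vertices drops along every edge. -/
theorem localOK_unfoldG [Fintype α] (hacyc : ∀ a, ¬ Relation.TransGen (uEdge S) a a) :
    ∀ (n : ℕ) (a : α), (Finset.univ.filter (Relation.TransGen (uEdge S) a)).card < n →
      LocalOK S.R (unfoldG (uEdge S) n a)
  | 0, _, h => absurd h (Nat.not_lt_zero _)
  | n + 1, a, h => by
    refine .node (fun b => ?_) (fun s hs => ?_)
    · have hsem : (if uEdge S a b then 1 else 0) ∈ (S.R a b).sem := by
        cases hR : S.R a b <;> simp [uEdge, hR, Mult.sem]
      exact (count_lab_children_unfoldG_succ n a b).symm ▸ hsem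
    · obtain ⟨b, hab, rfl⟩ := mem_children_unfoldG_succ.mp hs
      exact localOK_unfoldG hacyc n b ((card_transGen_lt_of_rel hacyc hab).trans_le (by omega))

end Schema

theorem query_implication_iff_embedding_in_universal_graph_general
    {α : Type} [Fintype α] [DecidableEq α] (S : MS α)
    (hpruned : ∀ a : α, ¬ Relation.TransGen (uEdge S) a a)
    (q : Twig α) :
    (∀ t : UTree α, SatS S t → Sat t q) ↔ QGEmb (uEdge S) S.root q := by
  constructor
  · intro himplied
    have hunfold : SatS S (unfoldG (uEdge S) (Fintype.card α) S.root) :=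
      ⟨unfoldG_lab _ _, localOK_unfoldG hpruned _ _ (card_transGen_lt_card hpruned S.root)⟩
    exact qgEmb_of_sat_unfoldG q (himplied _ hunfold)
  · rintro hemb t ⟨hroot, hok⟩
    exact hok.isSimulation.sat_of_qgEmb q (hroot ▸ hemb)

/-- Lemma 7(2): a twig query is implied by a pruned, satisfiable
disjunction-free multiplicity schema iff it embeds in the universal dependency graph. -/
theorem query_implication_iff_embedding_in_universal_graph
    {α : Type} [Fintype α] [DecidableEq α] (S : MS α)
    (hpruned : ∀ a : α, ¬ Relation.TransGen (uEdge S) a a)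
    (hsat : ∃ t : UTree α, SatS S t) (q : Twig α) :
    (∀ t : UTree α, SatS S t → Sat t q) ↔ QGEmb (uEdge S) S.root q :=
  query_implication_iff_embedding_in_universal_graph_general S hpruned q
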